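/- arXiv:2305.10155 — 4 statements merged into one kernel-verified Lean document; each statement's English description precedes it below -/
import Mathlib

section
/- For any constant ξ > 0 and n₀ ≥ log_{2^{-ξ}}((1-2^{-ξ})/2), the total length of guard-bands added is small: if |X| = 2^n and guard-bands of length ℓ_m = ⌊2^{(1-ξ)(m-1)}⌋ are inserted recursively at each level m from n down to n₀+1 (one guard-band of length ℓ_m between the two halves at recursion depth n-m), then the total length |G| of the resulting word satisfies |G| ≤ |X|·(1 + 2^{-(ξn₀+1)}/(1-2^{-ξ})). -/
/-!
Writing `r = 2^(-ξ)`, the floor gives `ℓ_m ≤ 2^(m-1) r^(m-1)`, so the `2^(n-m)` guard-bands of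
level `m` have total length at most `2^n/2 · r^(m-1)`. Summing over `m > n₀` is a geometric series
bounded by `2^n/2 · r^n₀/(1-r)`, and `r^n₀/2 = 2^(-(ξ n₀ + 1))`.
-/

/-- Guard-band length at level `m`: `ℓ_m = ⌊2^((1-ξ)(m-1))⌋`. -/
noncomputable def gbLen (ξ : ℝ) (m : ℕ) : ℕ := ⌊(2:ℝ) ^ ((1 - ξ) * ((m:ℝ) - 1))⌋₊

/-- Total length of `g(X, n₀, ξ)` when `|X| = 2^n`: at each level `m` from `n₀+1` to `n`
there are `2^(n-m)` guard-bands of length `ℓ_m`. -/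
noncomputable def gbTotalLen (ξ : ℝ) (n₀ n : ℕ) : ℕ :=
  2 ^ n + ∑ m ∈ Finset.Icc (n₀ + 1) n, 2 ^ (n - m) * gbLen ξ m

open Finset

lemma geom_sum_Icc_pred_le_of_lt_one {K : Type*} [Field K] [LinearOrder K]
    [IsStrictOrderedRing K] {r : K} (hr₀ : 0 ≤ r) (hr₁ : r < 1) (a n : ℕ) :
    ∑ m ∈ Icc (a + 1) n, r ^ (m - 1) ≤ r ^ a / (1 - r) := by
  calc ∑ m ∈ Icc (a + 1) n, r ^ (m - 1) = ∑ m ∈ Ico a n, r ^ m := by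
        rw [← Ico_add_one_right_eq_Icc, ← sum_Ico_add' (fun m => r ^ (m - 1)) a n 1]
        simp only [Nat.add_sub_cancel]
    _ ≤ r ^ a / (1 - r) := geom_sum_Ico_le_of_lt_one hr₀ hr₁

lemma rpow_neg_mul_natCast {b : ℝ} (hb : 0 ≤ b) (ξ : ℝ) (k : ℕ) :
    b ^ (-(ξ * k)) = (b ^ (-ξ)) ^ k := by
  rw [← Real.rpow_natCast, ← Real.rpow_mul hb, neg_mul]

lemma gbLen_le_two_pow_mul (ξ : ℝ) {m : ℕ} (hm : 1 ≤ m) :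
    (gbLen ξ m : ℝ) ≤ 2 ^ (m - 1) * ((2:ℝ) ^ (-ξ)) ^ (m - 1) := by
  have hexp : (1 - ξ) * ((m:ℝ) - 1) = (m - 1 : ℕ) - ξ * (m - 1 : ℕ) := by
    push_cast [Nat.cast_sub hm]; ring
  calc (gbLen ξ m : ℝ) ≤ (2:ℝ) ^ ((1 - ξ) * ((m:ℝ) - 1)) :=
        Nat.floor_le (Real.rpow_nonneg zero_le_two _)
    _ = 2 ^ (m - 1) * ((2:ℝ) ^ (-ξ)) ^ (m - 1) := by
        rw [hexp, sub_eq_add_neg, Real.rpow_add two_pos, Real.rpow_natCast,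
          rpow_neg_mul_natCast zero_le_two]

lemma two_pow_sub_mul_gbLen_le (ξ : ℝ) {m n : ℕ} (hm : 1 ≤ m) (hmn : m ≤ n) :
    ((2 ^ (n - m) * gbLen ξ m : ℕ) : ℝ) ≤ 2 ^ n / 2 * ((2:ℝ) ^ (-ξ)) ^ (m - 1) := by
  have hpow : (2:ℝ) ^ (n - m) * 2 ^ (m - 1) = 2 ^ n / 2 := by
    rw [← pow_add, eq_div_iff two_ne_zero, ← pow_succ]
    congr 1
    omega
  calc ((2 ^ (n - m) * gbLen ξ m : ℕ) : ℝ)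
      ≤ 2 ^ (n - m) * (2 ^ (m - 1) * ((2:ℝ) ^ (-ξ)) ^ (m - 1)) := by
        push_cast
        gcongr
        exact gbLen_le_two_pow_mul ξ hm
    _ = 2 ^ n / 2 * ((2:ℝ) ^ (-ξ)) ^ (m - 1) := by rw [← mul_assoc, hpow]

lemma sum_two_pow_sub_mul_gbLen_le {ξ : ℝ} (hξ : 0 < ξ) (n₀ n : ℕ) :
    ((∑ m ∈ Icc (n₀ + 1) n, 2 ^ (n - m) * gbLen ξ m : ℕ) : ℝ)
      ≤ 2 ^ n / 2 * (((2:ℝ) ^ (-ξ)) ^ n₀ / (1 - (2:ℝ) ^ (-ξ))) := by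
  have hr₀ : 0 ≤ (2:ℝ) ^ (-ξ) := Real.rpow_nonneg zero_le_two _
  have hr₁ : (2:ℝ) ^ (-ξ) < 1 := Real.rpow_lt_one_of_one_lt_of_neg one_lt_two (neg_neg_of_pos hξ)
  rw [Nat.cast_sum]
  calc _ ≤ ∑ m ∈ Icc (n₀ + 1) n, 2 ^ n / 2 * ((2:ℝ) ^ (-ξ)) ^ (m - 1) := by
        refine sum_le_sum fun m hm => ?_
        rw [mem_Icc] at hm
        exact two_pow_sub_mul_gbLen_le ξ (by omega) hm.2
    _ ≤ _ := by
        rw [← mul_sum]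
        gcongr
        exact geom_sum_Icc_pred_le_of_lt_one hr₀ hr₁ n₀ n

theorem stmt0_general (ξ : ℝ) (n₀ n : ℕ) (hξ : 0 < ξ) :
    (gbTotalLen ξ n₀ n : ℝ) ≤
      (2:ℝ) ^ n * (1 + (2:ℝ) ^ (-(ξ * (n₀:ℝ) + 1)) / (1 - (2:ℝ) ^ (-ξ))) := by
  have hrhs : (2:ℝ) ^ (-(ξ * (n₀:ℝ) + 1)) = ((2:ℝ) ^ (-ξ)) ^ n₀ / 2 := by
    rw [neg_add, Real.rpow_add two_pos, rpow_neg_mul_natCast zero_le_two, Real.rpow_neg_one,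
      div_eq_mul_inv]
  rw [gbTotalLen, Nat.cast_add, Nat.cast_pow, Nat.cast_two, hrhs]
  calc _ ≤ (2:ℝ) ^ n + 2 ^ n / 2 * (((2:ℝ) ^ (-ξ)) ^ n₀ / (1 - (2:ℝ) ^ (-ξ))) := by
        gcongr
        exact sum_two_pow_sub_mul_gbLen_le hξ n₀ n
    _ = _ := by ring

theorem stmt0 (ξ : ℝ) (n₀ n : ℕ) (hξ : 0 < ξ)
    (hn₀ : (2:ℝ) ^ (-(ξ * (n₀:ℝ))) ≤ (1 - (2:ℝ) ^ (-ξ)) / 2) :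
    (gbTotalLen ξ n₀ n : ℝ) ≤
      (2:ℝ) ^ n * (1 + (2:ℝ) ^ (-(ξ * (n₀:ℝ) + 1)) / (1 - (2:ℝ) ^ (-ξ))) :=
  stmt0_general ξ n₀ n hξ
end

section
/- With the recursive guard-band construction, if n₀ ≥ log_{2^{-ξ}}((1-2^{-ξ})/2) and n ≥ n₀+1, then for every index j in G = g(X, n₀, ξ), the number of data bits (bits originating from X) in the prefix G_1^j is at least the number of guard-band bits in that prefix. -/
/-- Marker word of `g(X, n₀, ξ)` at level `n`: `true` marks a data bit (originating
from `X`), `false` marks a guard-band bit. For `n ≤ n₀` the word is all data; otherwise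
it is the recursive concatenation with a guard-band of length `ℓ_n` in the middle. -/
noncomputable def gbMark (ξ : ℝ) (n₀ : ℕ) : ℕ → List Bool
  | 0 => List.replicate (2 ^ 0) true
  | (n + 1) =>
      if n + 1 ≤ n₀ then List.replicate (2 ^ (n + 1)) true
      else gbMark ξ n₀ n ++ List.replicate (gbLen ξ (n + 1)) false ++ gbMark ξ n₀ n

/-
Call a Boolean word prefix-balanced if no prefix has more `false`s (guard-band bits) than
`true`s (data bits). If `w` is prefix-balanced and its surplus of data bits is at least `L`,
then so is `w ++ false^L ++ w`: a prefix reaching into the second copy of `w` contains all of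
`w` and the whole guard band. By induction on the level it therefore suffices that, for
`n ≥ n₀`, the `2^n` data bits of the level-`n` word cover its guard-band bits plus `ℓ_{n+1}`.
With `r = 2^{-ξ}` one has `ℓ_{m+1} ≤ 2^m r^m`, so the level-`n` word has at most
`2^{n-1} ∑_{n₀ ≤ k < n} r^k ≤ 2^{n-1} r^{n₀} / (1 - r) ≤ 2^{n-2}` guard-band bits, while
`ℓ_{n+1} ≤ 2^n r^{n₀} ≤ 2^{n-1}`; the hypothesis on `n₀` says exactly `r^{n₀} ≤ (1 - r) / 2`.
-/

open Finset

def PrefixBalanced (w : List Bool) : Prop :=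
  ∀ j, (w.take j).count false ≤ (w.take j).count true

lemma prefixBalanced_replicate_true (k : ℕ) : PrefixBalanced (List.replicate k true) := by
  intro j
  simp [List.take_replicate, List.count_replicate]

lemma PrefixBalanced.append_replicate_false_append {w : List Bool} {L : ℕ}
    (hw : PrefixBalanced w) (hL : w.count false + L ≤ w.count true) :
    PrefixBalanced (w ++ List.replicate L false ++ w) := by
  intro j
  rcases le_or_gt j w.length with hj | hj
  · rw [List.append_assoc, List.take_append_of_le_length hj]
    exact hw j
  · have hsuffix := hw (j - w.length - L)
    simp only [List.append_assoc, List.take_append, List.take_of_length_le hj.le,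
      List.count_append, List.take_replicate, List.count_replicate, List.length_replicate,
      beq_self_eq_true, reduceIte, Bool.false_eq_true, beq_iff_eq]
    omega

section GuardBand

variable (ξ : ℝ) (n₀ : ℕ)

lemma gbMark_of_le {n : ℕ} (h : n ≤ n₀) : gbMark ξ n₀ n = List.replicate (2 ^ n) true := by
  cases n with
  | zero => rfl
  | succ n => simp [gbMark, h]

lemma gbMark_succ_of_le {n : ℕ} (h : n₀ ≤ n) :
    gbMark ξ n₀ (n + 1) =
      gbMark ξ n₀ n ++ List.replicate (gbLen ξ (n + 1)) false ++ gbMark ξ n₀ n := by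
  simp [gbMark, show ¬ n + 1 ≤ n₀ by omega]

lemma count_true_gbMark (n : ℕ) : (gbMark ξ n₀ n).count true = 2 ^ n := by
  induction n with
  | zero => simp [gbMark]
  | succ n ih =>
    rcases le_or_gt (n + 1) n₀ with h | h
    · simp [gbMark_of_le ξ n₀ h]
    · simp [gbMark_succ_of_le ξ n₀ (Nat.lt_succ_iff.mp h), List.count_append,
        List.count_replicate, ih, pow_succ, mul_two]

lemma gbLen_succ_le (m : ℕ) : (gbLen ξ (m + 1) : ℝ) ≤ 2 ^ m * ((2 : ℝ) ^ (-ξ)) ^ m := by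
  have h : (2 : ℝ) ^ ((1 - ξ) * (((m + 1 : ℕ) : ℝ) - 1)) = 2 ^ m * ((2 : ℝ) ^ (-ξ)) ^ m := by
    rw [← Real.rpow_natCast, ← Real.rpow_natCast, ← Real.rpow_mul zero_le_two,
      ← Real.rpow_add two_pos]
    push_cast
    ring_nf
  exact h ▸ Nat.floor_le (by positivity)

lemma two_mul_count_false_gbMark_le {n : ℕ} (h : n₀ ≤ n) :
    2 * ((gbMark ξ n₀ n).count false : ℝ) ≤ 2 ^ n * ∑ k ∈ Ico n₀ n, ((2 : ℝ) ^ (-ξ)) ^ k := by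
  induction n, h using Nat.le_induction with
  | base => simp [gbMark_of_le ξ n₀ le_rfl, List.count_replicate]
  | succ n h ih =>
    have hcount : ((gbMark ξ n₀ (n + 1)).count false : ℝ) =
        2 * (gbMark ξ n₀ n).count false + gbLen ξ (n + 1) := by
      simp only [gbMark_succ_of_le ξ n₀ h, List.count_append, List.count_replicate_self]
      push_cast
      ring
    rw [hcount, sum_Ico_succ_top h, pow_succ]
    nlinarith [gbLen_succ_le ξ n]

lemma count_false_gbMark_add_gbLen_le (hξ : 0 < ξ)
    (hn₀ : (2:ℝ) ^ (-(ξ * (n₀:ℝ))) ≤ (1 - (2:ℝ) ^ (-ξ)) / 2) {n : ℕ} (h : n₀ ≤ n) :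
    (gbMark ξ n₀ n).count false + gbLen ξ (n + 1) ≤ 2 ^ n := by
  set r : ℝ := (2 : ℝ) ^ (-ξ)
  have hr0 : 0 ≤ r := by positivity
  have hr1 : r < 1 := Real.rpow_lt_one_of_one_lt_of_neg one_lt_two (neg_neg_of_pos hξ)
  have hrn₀ : r ^ n₀ ≤ (1 - r) / 2 := by
    rwa [← Real.rpow_natCast, ← Real.rpow_mul zero_le_two, neg_mul]
  have hsum : ∑ k ∈ Ico n₀ n, r ^ k ≤ 1 / 2 :=
    (geom_sum_Ico_le_of_lt_one hr0 hr1).trans <| by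
      rw [div_le_iff₀ (sub_pos.mpr hr1)]; linarith
  have hℓ : r ^ n ≤ 1 / 2 := (pow_le_pow_of_le_one hr0 hr1.le h).trans (by linarith)
  have hF := two_mul_count_false_gbMark_le ξ n₀ h
  have hL := gbLen_succ_le ξ n
  have h2n : (0 : ℝ) < 2 ^ n := by positivity
  exact_mod_cast (show ((gbMark ξ n₀ n).count false : ℝ) + gbLen ξ (n + 1) ≤ 2 ^ n by
    nlinarith)

lemma prefixBalanced_gbMark (hξ : 0 < ξ)
    (hn₀ : (2:ℝ) ^ (-(ξ * (n₀:ℝ))) ≤ (1 - (2:ℝ) ^ (-ξ)) / 2) (n : ℕ) :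
    PrefixBalanced (gbMark ξ n₀ n) := by
  induction n with
  | zero => exact prefixBalanced_replicate_true _
  | succ n ih =>
    rcases le_or_gt (n + 1) n₀ with h | h
    · rw [gbMark_of_le ξ n₀ h]
      exact prefixBalanced_replicate_true _
    · have h : n₀ ≤ n := Nat.lt_succ_iff.mp h
      rw [gbMark_succ_of_le ξ n₀ h]
      refine ih.append_replicate_false_append ?_
      rw [count_true_gbMark]
      exact count_false_gbMark_add_gbLen_le ξ n₀ hξ hn₀ h

end GuardBand

theorem stmt1_general (ξ : ℝ) (n₀ n : ℕ) (hξ : 0 < ξ)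
    (hn₀ : (2:ℝ) ^ (-(ξ * (n₀:ℝ))) ≤ (1 - (2:ℝ) ^ (-ξ)) / 2)
    (j : ℕ) :
    ((gbMark ξ n₀ n).take j).count false ≤ ((gbMark ξ n₀ n).take j).count true :=
  prefixBalanced_gbMark ξ n₀ hξ hn₀ n j

theorem stmt1 (ξ : ℝ) (n₀ n : ℕ) (hξ : 0 < ξ)
    (hn₀ : (2:ℝ) ^ (-(ξ * (n₀:ℝ))) ≤ (1 - (2:ℝ) ^ (-ξ)) / 2)
    (hn : n₀ + 1 ≤ n) (j : ℕ) :
    ((gbMark ξ n₀ n).take j).count false ≤ ((gbMark ξ n₀ n).take j).count true :=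
  stmt1_general ξ n₀ n hξ hn₀ j
end

section
/- Let Z = Z_I ⊙ Z_Δ ⊙ Z_II be a concatenation of binary words where Z_Δ consists only of '0' symbols. If the middle index i_mid = ⌊(|Z|+1)/2⌋ of Z falls within the Z_Δ segment (the GBM event), then trimming (removing all leading and trailing zeros) the left half Z_L = (Z₁,...,Z_{i_mid}) yields the same word as trimming Z_I, and trimming the right half Z_R = (Z_{i_mid+1},...,Z_{|Z|}) yields the same word as trimming Z_II: (Z_L)* = (Z_I)* and (Z_R)* = (Z_II)*. -/
/-!
Under the GBM event the cut falls inside the all-zero block `Z_Δ`, so the left half is `Z_I`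
followed by zeros and the right half is `Z_II` preceded by zeros; trimming removes exactly
those zeros.
-/

/-- Trimming: remove all leading and trailing `'0'` (= `false`) symbols. -/
def trim (w : List Bool) : List Bool :=
  ((w.dropWhile (· = false)).reverse.dropWhile (· = false)).reverse

theorem trim_zeros_append {z : List Bool} (hz : ∀ b ∈ z, b = false) (u : List Bool) :
    trim (z ++ u) = trim u := by
  rw [trim, List.dropWhile_append_of_pos (by simpa using hz), trim]

theorem trim_append_zeros (u : List Bool) {z : List Bool} (hz : ∀ b ∈ z, b = false) :
    trim (u ++ z) = trim u := by
  rw [trim, trim, List.dropWhile_append]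
  split_ifs with hu
  · rw [List.isEmpty_iff.mp hu, List.dropWhile_eq_nil_iff (l := z).mpr (by simpa using hz)]
  · rw [List.reverse_append, List.dropWhile_append_of_pos (by simpa using hz)]

theorem stmt8_general (ZI ZΔ ZII : List Bool) (hΔ : ∀ b ∈ ZΔ, b = false)
    (imid : ℕ)
    (hGBM1 : ZI.length < imid) (hGBM2 : imid ≤ ZI.length + ZΔ.length) :
    trim ((ZI ++ ZΔ ++ ZII).take imid) = trim ZI ∧
    trim ((ZI ++ ZΔ ++ ZII).drop imid) = trim ZII := by
  obtain ⟨k, rfl⟩ : ∃ k, imid = ZI.length + k := ⟨imid - ZI.length, by omega⟩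
  have hk : k ≤ ZΔ.length := by omega
  rw [List.append_assoc, List.take_length_add_append, List.take_append_of_le_length hk,
    List.drop_length_add_append, List.drop_append_of_le_length hk]
  exact ⟨trim_append_zeros ZI fun b hb => hΔ b (List.mem_of_mem_take hb),
    trim_zeros_append (fun b hb => hΔ b (List.mem_of_mem_drop hb)) ZII⟩

theorem stmt8 (ZI ZΔ ZII : List Bool) (hΔ : ∀ b ∈ ZΔ, b = false)
    (htrimmed : trim (ZI ++ ZΔ ++ ZII) = ZI ++ ZΔ ++ ZII)
    (imid : ℕ) (himid : imid = ((ZI ++ ZΔ ++ ZII).length + 1) / 2)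
    (hGBM1 : ZI.length < imid) (hGBM2 : imid ≤ ZI.length + ZΔ.length) :
    trim ((ZI ++ ZΔ ++ ZII).take imid) = trim ZI ∧
    trim ((ZI ++ ZΔ ++ ZII).drop imid) = trim ZII :=
  stmt8_general ZI ZΔ ZII hΔ imid hGBM1 hGBM2
end

section
/- Domination of the tail-free process: fix κ ≥ 1, d ≥ 0, 1/2 < γ_a < γ. Let (B_n) be a bit sequence, N = 2^n, and define for n ≥ n_w: Z''_{n+1} = κN^d·Z''_n + 2^{-2^{γn}} if B_{n+1}=0, and κN^d·(Z''_n)² + 2^{-2^{γn}} if B_{n+1}=1; and Z̄_{n+1} = 2κN^d·Z̄_n if B_{n+1}=0, and 2κN^d·(Z̄_n)² if B_{n+1}=1, with equal starting values Z''_{n_w} = Z̄_{n_w}. If n_w ≥ 1/(γ−γ_a) and Z̄_n ≥ 2^{-2^{γ_a n}} for all n ≥ n_w, then Z''_n ≤ Z̄_n for all n ≥ n_w. -/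
/-!
Write `c = κ N^d ≥ 1` and `t = 2^{-2^{γn}}` for the tail. Since `(γ - γa) n ≥ 1`, the tail is at
most `(2^{-2^{γa n}})^2 ≤ 2^{-2^{γa n}}`, hence at most `Z̄_n^2` and `Z̄_n`, so it is absorbed by
the factor `2` in the recursion of `Z̄`: `c z + t ≤ 2 c Z̄_n` and `c z^2 + t ≤ 2 c Z̄_n^2` whenever
`0 ≤ z ≤ Z̄_n`. Induction on `n` concludes.
-/

theorem two_rpow_neg_two_rpow_le_sq {a b : ℝ} (h : a + 1 ≤ b) :
    (2:ℝ) ^ (-(2:ℝ) ^ b) ≤ ((2:ℝ) ^ (-(2:ℝ) ^ a)) ^ 2 := by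
  calc (2:ℝ) ^ (-(2:ℝ) ^ b) ≤ (2:ℝ) ^ (-(2:ℝ) ^ (a + 1)) := by gcongr <;> norm_num
    _ = ((2:ℝ) ^ (-(2:ℝ) ^ a)) ^ 2 := by
      rw [← Real.rpow_mul_natCast two_pos.le, Real.rpow_add two_pos, Real.rpow_one]
      ring_nf

theorem mul_add_le_two_mul {c t z w : ℝ} (hc : 0 ≤ c) (hz : z ≤ w) (ht : t ≤ c * w) :
    c * z + t ≤ 2 * c * w := by
  nlinarith [mul_le_mul_of_nonneg_left hz hc]

theorem mul_sq_add_le_two_mul_sq {c t z w : ℝ} (hc : 0 ≤ c) (hz0 : 0 ≤ z) (hz : z ≤ w)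
    (ht : t ≤ c * w ^ 2) : c * z ^ 2 + t ≤ 2 * c * w ^ 2 := by
  nlinarith [mul_le_mul_of_nonneg_left (pow_le_pow_left₀ hz0 hz 2) hc]

theorem stmt12_general (κ d γa γ : ℝ) (hκ : 1 ≤ κ) (hd : 0 ≤ d)
    (hγ : γa < γ)
    (B : ℕ → Bool) (nw : ℕ) (hnw : 1 / (γ - γa) ≤ (nw : ℝ))
    (Z'' Zbar : ℕ → ℝ)
    (hinit : Z'' nw = Zbar nw)
    (hrec'' : ∀ n ≥ nw, Z'' (n + 1) =
      (if B (n + 1) then κ * ((2:ℝ) ^ n) ^ d * (Z'' n) ^ 2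
       else κ * ((2:ℝ) ^ n) ^ d * Z'' n) + (2:ℝ) ^ (-((2:ℝ) ^ (γ * (n:ℝ)))))
    (hrecbar : ∀ n ≥ nw, Zbar (n + 1) =
      if B (n + 1) then 2 * κ * ((2:ℝ) ^ n) ^ d * (Zbar n) ^ 2
      else 2 * κ * ((2:ℝ) ^ n) ^ d * Zbar n)
    (hlow : ∀ n ≥ nw, (2:ℝ) ^ (-((2:ℝ) ^ (γa * (n:ℝ)))) ≤ Zbar n) :
    ∀ n ≥ nw, Z'' n ≤ Zbar n := by
  have hgap : ∀ n ≥ nw, γa * n + 1 ≤ γ * n := fun n hn => by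
    have := (div_le_iff₀ (sub_pos.2 hγ)).1 (hnw.trans (Nat.cast_le.2 hn))
    linarith
  suffices ∀ n ≥ nw, 0 ≤ Z'' n ∧ Z'' n ≤ Zbar n from fun n hn => (this n hn).2
  intro n hn
  induction n, hn using Nat.le_induction with
  | base => exact ⟨hinit ▸ (Real.rpow_pos_of_pos two_pos _).le.trans (hlow nw le_rfl), hinit.le⟩
  | succ n hn ih =>
    obtain ⟨hz0, hz⟩ := ih
    have hc : 1 ≤ κ * ((2:ℝ) ^ n) ^ d :=
      one_le_mul_of_one_le_of_one_le hκ (Real.one_le_rpow (one_le_pow₀ one_le_two) hd)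
    have hL : (2:ℝ) ^ (-((2:ℝ) ^ (γa * (n:ℝ)))) ≤ 1 :=
      Real.rpow_le_one_of_one_le_of_nonpos one_le_two (by simp only [neg_nonpos]; positivity)
    have ht0 : 0 ≤ (2:ℝ) ^ (-((2:ℝ) ^ (γ * (n:ℝ)))) := by positivity
    have htsq : (2:ℝ) ^ (-((2:ℝ) ^ (γ * (n:ℝ)))) ≤ Zbar n ^ 2 :=
      (two_rpow_neg_two_rpow_le_sq (hgap n hn)).trans
        (pow_le_pow_left₀ (by positivity) (hlow n hn) 2)
    have ht : (2:ℝ) ^ (-((2:ℝ) ^ (γ * (n:ℝ)))) ≤ Zbar n :=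
      (two_rpow_neg_two_rpow_le_sq (hgap n hn)).trans
        ((pow_le_of_le_one (by positivity) hL two_ne_zero).trans (hlow n hn))
    rw [hrec'' n hn, hrecbar n hn, mul_assoc 2 κ]
    cases B (n + 1)
    · refine ⟨by simp only [Bool.false_eq_true, if_false]; positivity, ?_⟩
      exact mul_add_le_two_mul (by linarith) hz
        (ht.trans (le_mul_of_one_le_left (hz0.trans hz) hc))
    · refine ⟨by simp only [if_true]; positivity, ?_⟩
      exact mul_sq_add_le_two_mul_sq (by linarith) hz0 hz
        (htsq.trans (le_mul_of_one_le_left (sq_nonneg _) hc))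

theorem stmt12 (κ d γa γ : ℝ) (hκ : 1 ≤ κ) (hd : 0 ≤ d)
    (hγa : 1 / 2 < γa) (hγ : γa < γ)
    (B : ℕ → Bool) (nw : ℕ) (hnw : 1 / (γ - γa) ≤ (nw : ℝ))
    (Z'' Zbar : ℕ → ℝ)
    (hinit : Z'' nw = Zbar nw)
    (hrec'' : ∀ n ≥ nw, Z'' (n + 1) =
      (if B (n + 1) then κ * ((2:ℝ) ^ n) ^ d * (Z'' n) ^ 2
       else κ * ((2:ℝ) ^ n) ^ d * Z'' n) + (2:ℝ) ^ (-((2:ℝ) ^ (γ * (n:ℝ)))))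
    (hrecbar : ∀ n ≥ nw, Zbar (n + 1) =
      if B (n + 1) then 2 * κ * ((2:ℝ) ^ n) ^ d * (Zbar n) ^ 2
      else 2 * κ * ((2:ℝ) ^ n) ^ d * Zbar n)
    (hlow : ∀ n ≥ nw, (2:ℝ) ^ (-((2:ℝ) ^ (γa * (n:ℝ)))) ≤ Zbar n) :
    ∀ n ≥ nw, Z'' n ≤ Zbar n :=
  stmt12_general κ d γa γ hκ hd hγ B nw hnw Z'' Zbar hinit hrec'' hrecbar hlow
end
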